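/- arXiv:2109.13824 — 2 statements merged into one kernel-verified Lean document; each statement's English description precedes it below -/
import Mathlib

section
/- For ρ ≥ 0 and t > 0, the volume of the set {(α₁,α₂,β₁,…,β_ρ) ∈ ℝ^(ρ+2) : α₁² + α₂² ≤ 1/t² and β₁² + ⋯ + β_ρ² ≤ t(α₁² + α₂²)} equals 2π^((ρ+2)/2) / ((ρ+2)·Γ(ρ/2 + 1)·t^((ρ+4)/2)). -/
/-!
Identify `ℝ × ℝ` with `ℂ`. Over a point `z` of the disc `‖z‖ ≤ 1/t` the fibre of the region is
the `ρ`-ball of radius `√t ‖z‖`, of volume `ω_ρ t^(ρ/2) ‖z‖^ρ` with `ω_ρ = π^(ρ/2) / Γ(ρ/2 + 1)`.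
By Fubini the volume is `ω_ρ t^(ρ/2) ∫_{‖z‖ ≤ 1/t} ‖z‖^ρ dz`, and in polar coordinates this
integral is `2π t^(-(ρ+2)) / (ρ + 2)`.
-/

open MeasureTheory Real

open Metric Set Module in
theorem integral_closedBall_norm_pow {E : Type*} [NormedAddCommGroup E] [NormedSpace ℝ E]
    [FiniteDimensional ℝ E] [MeasurableSpace E] [BorelSpace E] [Nontrivial E]
    (μ : Measure E) [μ.IsAddHaarMeasure] (k : ℕ) {R : ℝ} (hR : 0 ≤ R) :
    ∫ x in closedBall (0 : E) R, ‖x‖ ^ k ∂μ =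
      finrank ℝ E * μ.real (ball 0 1) * R ^ (finrank ℝ E + k) / (finrank ℝ E + k) := by
  obtain ⟨m, hm⟩ : ∃ m, finrank ℝ E = m + 1 := Nat.exists_eq_add_one.mpr finrank_pos
  have hradial (y : ℝ) :
      y ^ (finrank ℝ E - 1) • (Iic R).indicator (· ^ k) y = (Iic R).indicator (· ^ (m + k)) y := by
    by_cases hy : y ∈ Iic R <;> simp [hy, hm, pow_add]
  calc ∫ x in closedBall (0 : E) R, ‖x‖ ^ k ∂μ
      = ∫ x, (Iic R).indicator (· ^ k) ‖x‖ ∂μ := by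
        rw [← integral_indicator measurableSet_closedBall]
        congr 1 with x
        simp [indicator]
    _ = finrank ℝ E • μ.real (ball 0 1) •
          ∫ y in Ioi (0 : ℝ), y ^ (finrank ℝ E - 1) • (Iic R).indicator (· ^ k) y :=
        integral_fun_norm_addHaar μ _
    _ = finrank ℝ E * μ.real (ball 0 1) * ∫ y in (0 : ℝ)..R, y ^ (m + k) := by
        simp_rw [hradial, setIntegral_indicator measurableSet_Iic, Ioi_inter_Iic,
          intervalIntegral.integral_of_le hR, nsmul_eq_mul, smul_eq_mul, mul_assoc]
    _ = _ := by
        rw [integral_pow, hm]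
        push_cast
        ring_nf

open Metric in
theorem lintegral_closedBall_norm_pow_complex (k : ℕ) {R : ℝ} (hR : 0 ≤ R) :
    ∫⁻ z in closedBall (0 : ℂ) R, ENNReal.ofReal (‖z‖ ^ k) =
      ENNReal.ofReal (2 * π * R ^ (k + 2) / (k + 2)) := by
  rw [← ofReal_integral_eq_lintegral_ofReal, integral_closedBall_norm_pow volume k hR,
    Complex.finrank_real_complex]
  · simp only [Nat.cast_ofNat, Measure.real, Complex.volume_ball, ENNReal.ofReal_one, one_pow,
      one_mul, ENNReal.coe_toReal, NNReal.coe_real_pi]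
    ring_nf
  · exact (continuous_norm.pow k).continuousOn.integrableOn_compact (isCompact_closedBall 0 R)
  · exact Filter.Eventually.of_forall fun z => by positivity

theorem volume_setOf_sum_sq_le (n : ℕ) {R : ℝ} (hR : 0 ≤ R) :
    volume {β : Fin n → ℝ | ∑ j, β j ^ 2 ≤ R ^ 2} =
      ENNReal.ofReal (√π ^ n / Gamma (n / 2 + 1) * R ^ n) := by
  rcases n.eq_zero_or_pos with rfl | hn
  · simp [volume_pi, sq_nonneg]
  · have : Nonempty (Fin n) := Fin.pos_iff_nonempty.mp hn
    have hball : {β : Fin n → ℝ | ∑ j, β j ^ 2 ≤ R ^ 2} =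
        WithLp.toLp 2 ⁻¹' Metric.closedBall (0 : EuclideanSpace ℝ (Fin n)) R := by
      ext β
      simp [EuclideanSpace.norm_eq, Real.sqrt_le_left, hR]
    rw [hball, (PiLp.volume_preserving_toLp (Fin n)).measure_preimage
      measurableSet_closedBall.nullMeasurableSet, EuclideanSpace.volume_closedBall,
      Fintype.card_fin, ← ENNReal.ofReal_pow hR, ← ENNReal.ofReal_mul (by positivity), mul_comm]

theorem MeasureTheory.Measure.prod_apply_setOf_fst_mem_and {α β : Type*} [MeasurableSpace α]
    [MeasurableSpace β] {μ : Measure α} {ν : Measure β} [SFinite ν] {A : Set α} {B : α → Set β}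
    (hA : MeasurableSet A) (hs : MeasurableSet {q : α × β | q.1 ∈ A ∧ q.2 ∈ B q.1}) :
    μ.prod ν {q : α × β | q.1 ∈ A ∧ q.2 ∈ B q.1} = ∫⁻ x in A, ν (B x) ∂μ := by
  rw [Measure.prod_apply hs, ← lintegral_indicator hA]
  congr 1 with x
  by_cases hx : x ∈ A <;> simp [hx, Set.preimage]

theorem volume_phase_one_region_eq_lintegral (ρ : ℕ) {t : ℝ} (ht : 0 < t) :
    volume {p : ℝ × ℝ × (Fin ρ → ℝ) |
        p.1 ^ 2 + p.2.1 ^ 2 ≤ 1 / t ^ 2 ∧ (∑ j, (p.2.2 j) ^ 2) ≤ t * (p.1 ^ 2 + p.2.1 ^ 2)} =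
      ∫⁻ z in Metric.closedBall (0 : ℂ) (1 / t),
        volume {β : Fin ρ → ℝ | ∑ j, β j ^ 2 ≤ (√t * ‖z‖) ^ 2} := by
  set S := {p : ℝ × ℝ × (Fin ρ → ℝ) |
    p.1 ^ 2 + p.2.1 ^ 2 ≤ 1 / t ^ 2 ∧ (∑ j, (p.2.2 j) ^ 2) ≤ t * (p.1 ^ 2 + p.2.1 ^ 2)}
  have hS : MeasurableSet S := measurableSet_setOfPred.mpr (by fun_prop)
  let e : ℂ × (Fin ρ → ℝ) ≃ᵐ ℝ × ℝ × (Fin ρ → ℝ) :=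
    (Complex.measurableEquivRealProd.prodCongr (.refl _)).trans .prodAssoc
  have he : MeasurePreserving e :=
    (Complex.volume_preserving_equiv_real_prod.prod (.id _)).trans volume_preserving_prodAssoc
  have hpre : e ⁻¹' S = {q | q.1 ∈ Metric.closedBall 0 (1 / t) ∧
      q.2 ∈ {β : Fin ρ → ℝ | ∑ j, β j ^ 2 ≤ (√t * ‖q.1‖) ^ 2}} := by
    ext ⟨z, β⟩
    have he_apply : e (z, β) = (z.re, z.im, β) := rfl
    have hz : z.re ^ 2 + z.im ^ 2 = ‖z‖ ^ 2 := by
      rw [Complex.sq_norm, Complex.normSq_apply]; ring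
    have hr : ‖z‖ ^ 2 ≤ 1 / t ^ 2 ↔ ‖z‖ ≤ 1 / t := by
      rw [← one_div_pow]; exact pow_le_pow_iff_left₀ (norm_nonneg z) (by positivity) two_ne_zero
    simp only [S, Set.mem_preimage, he_apply, Set.mem_ofPred_eq, hz, hr, Metric.mem_closedBall,
      dist_zero_right, mul_pow, sq_sqrt ht.le]
  rw [← he.measure_preimage hS.nullMeasurableSet, hpre, Measure.volume_eq_prod]
  exact Measure.prod_apply_setOf_fst_mem_and
    (B := fun z : ℂ => {β : Fin ρ → ℝ | ∑ j, β j ^ 2 ≤ (√t * ‖z‖) ^ 2})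
    Metric.isClosed_closedBall.measurableSet (hpre ▸ hS.preimage e.measurable)

/-- For `ρ ≥ 0` and `t > 0`, the volume of
`{(α₁,α₂,β) : α₁² + α₂² ≤ 1/t², Σ βⱼ² ≤ t(α₁² + α₂²)}` in `ℝ^(ρ+2)` equals
`2π^((ρ+2)/2) / ((ρ+2)·Γ(ρ/2+1)·t^((ρ+4)/2))`. -/
theorem volume_phase_one_region (ρ : ℕ) (t : ℝ) (ht : 0 < t) :
    volume {p : ℝ × ℝ × (Fin ρ → ℝ) |
        p.1 ^ 2 + p.2.1 ^ 2 ≤ 1 / t ^ 2 ∧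
        (∑ j, (p.2.2 j) ^ 2) ≤ t * (p.1 ^ 2 + p.2.1 ^ 2)}
      = ENNReal.ofReal
          (2 * π ^ (((ρ : ℝ) + 2) / 2) /
            (((ρ : ℝ) + 2) * Real.Gamma ((ρ : ℝ) / 2 + 1) * t ^ (((ρ : ℝ) + 4) / 2))) := by
  have hslice (z : ℂ) : volume {β : Fin ρ → ℝ | ∑ j, β j ^ 2 ≤ (√t * ‖z‖) ^ 2} =
      ENNReal.ofReal (√π ^ ρ / Gamma (ρ / 2 + 1) * √t ^ ρ) * ENNReal.ofReal (‖z‖ ^ ρ) := by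
    rw [volume_setOf_sum_sq_le ρ (by positivity), ← ENNReal.ofReal_mul (by positivity), mul_pow,
      mul_assoc]
  simp_rw [volume_phase_one_region_eq_lintegral ρ ht, hslice]
  rw [lintegral_const_mul _ (by fun_prop), lintegral_closedBall_norm_pow_complex ρ (by positivity),
    ← ENNReal.ofReal_mul (by positivity)]
  congr 1
  have hΓ : 0 < Gamma (ρ / 2 + 1) := Gamma_pos_of_pos (by positivity)
  rw [rpow_div_two_eq_sqrt _ pi_nonneg, rpow_div_two_eq_sqrt _ ht.le,
    show (ρ : ℝ) + 2 = (ρ + 2 : ℕ) by push_cast; ring,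
    show (ρ : ℝ) + 4 = (ρ + 4 : ℕ) by push_cast; ring, rpow_natCast, rpow_natCast]
  have hπ : π = √π ^ 2 := (sq_sqrt pi_nonneg).symm
  have ht2 : t = √t ^ 2 := (sq_sqrt ht.le).symm
  have hs : 0 < √t := sqrt_pos.2 ht
  generalize √π = p at hπ ⊢
  generalize √t = s at ht2 hs ⊢
  subst ht2
  rw [hπ, one_div_pow]
  field_simp
  ring
end

section
/- Let ⟨-,-⟩ be a symmetric bilinear form of signature (2,ρ) on V = ℝ^(ρ+2), let φ ∈ V ⊗ ℂ be such that Re(φ), Im(φ) span a positive definite 2-plane with ⟨Re φ, Re φ⟩ = ⟨Im φ, Im φ⟩ = t > 0 and ⟨Re φ, Im φ⟩ = 0. Then the set Υ = {v ∈ V : ⟨v,v⟩ ≥ 0, ⟨Re φ, v⟩² + ⟨Im φ, v⟩² ≤ 1} has Lebesgue volume 2π^((ρ+2)/2) / ((ρ+2)·Γ(ρ/2+1)·t^((ρ+2)/2)·√|Disc|), where Disc is the determinant of the Gram matrix of ⟨-,-⟩ in the standard basis of V. -/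
/-!
Rescaling `Re φ`, `Im φ` by `1/√t` and completing them by a basis of their negative definite
orthogonal complement in which the form is `-1` on the diagonal gives linear coordinates
`(x, y) ∈ ℝ² × ℝ^ρ` with `⟨v, v⟩ = |x|² - |y|²` and `⟨Re φ, v⟩² + ⟨Im φ, v⟩² = t |x|²`.
This change of variables turns the Gram matrix into `diag(1, 1, -1, …, -1)`, so its Jacobian
is `1/√|Disc|`, and it turns `Υ` into the solid cone `|y| ≤ |x| ≤ t^(-1/2)`. By Cavalieri the
cone has the volume of the ball of radius `t^(-1/2)` in `ℝ^(ρ+2)`: since the area of a planar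
disc is linear in its squared radius, for fixed `y` both slices have area `π (1/t - |y|²)`.
-/

open MeasureTheory Real Module Metric

def signatureForm (p q : ℕ) : (Fin p ⊕ Fin q → ℝ) →ₗ[ℝ] (Fin p ⊕ Fin q → ℝ) →ₗ[ℝ] ℝ :=
  Matrix.toLinearMap₂' ℝ (Matrix.diagonal (Sum.elim 1 (-1)))

theorem signatureForm_apply {p q : ℕ} (c c' : Fin p ⊕ Fin q → ℝ) :
    signatureForm p q c c' = ∑ i, c (.inl i) * c' (.inl i) - ∑ j, c (.inr j) * c' (.inr j) := by
  simp [signatureForm, Matrix.toLinearMap₂'_apply', dotProduct, Matrix.mulVec_diagonal,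
    Fintype.sum_sum_type, sub_eq_add_neg]

theorem det_toMatrix₂'_signatureForm {p q : ℕ} :
    (LinearMap.toMatrix₂' ℝ (signatureForm p q)).det = (-1) ^ q := by
  simp [signatureForm, Matrix.det_diagonal, Fintype.prod_sum_type]

theorem LinearMap.IsSymm.exists_neg_orthonormal_family {E : Type*} [AddCommGroup E]
    [Module ℝ E] [FiniteDimensional ℝ E] {q : ℕ} (hE : finrank ℝ E = q)
    {B : E →ₗ[ℝ] E →ₗ[ℝ] ℝ} (hB : B.IsSymm) (hneg : ∀ v ≠ 0, B v v < 0) :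
    ∃ w : Fin q → E, ∀ i j, B (w i) (w j) = if i = j then -1 else 0 := by
  subst hE
  obtain ⟨b, hb⟩ := LinearMap.BilinForm.exists_orthogonal_basis hB
  refine ⟨fun i => (√(-B (b i) (b i)))⁻¹ • b i, fun i j => ?_⟩
  split_ifs with h
  · subst h
    have hi := hneg _ (b.ne_zero i)
    have hs : √(-B (b i) (b i)) ^ 2 = -B (b i) (b i) := sq_sqrt (by linarith)
    have : √(-B (b i) (b i)) ≠ 0 := (sqrt_pos.2 (by linarith)).ne'
    simp only [map_smul, LinearMap.smul_apply, smul_eq_mul]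
    field_simp
    linarith
  · simp [hb h]

theorem finrank_ker_pi_add_eq_finrank {V : Type*} [AddCommGroup V] [Module ℝ V]
    [FiniteDimensional ℝ V] {p : ℕ} (B : V →ₗ[ℝ] V →ₗ[ℝ] ℝ) (a : Fin p → V) {t : ℝ} (ht : t ≠ 0)
    (ha : ∀ i j, B (a i) (a j) = if i = j then t else 0) :
    finrank ℝ (LinearMap.ker (LinearMap.pi fun i => B (a i))) + p = finrank ℝ V := by
  have hsurj : LinearMap.range (LinearMap.pi fun i => B (a i)) = ⊤ := by
    refine LinearMap.range_eq_top.2 fun y => ⟨∑ j, (y j / t) • a j, funext fun i => ?_⟩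
    simp [ha, ht]
  rw [← LinearMap.finrank_range_add_finrank_ker (LinearMap.pi fun i => B (a i)), hsurj,
    finrank_top, finrank_fin_fun, add_comm]

theorem exists_compl₁₂_eq_signatureForm {V : Type*} [AddCommGroup V] [Module ℝ V]
    [FiniteDimensional ℝ V] {p q : ℕ} (hV : finrank ℝ V = p + q) {B : V →ₗ[ℝ] V →ₗ[ℝ] ℝ}
    (hB : B.IsSymm) {a : Fin p → V} {t : ℝ} (ht : 0 < t)
    (ha : ∀ i j, B (a i) (a j) = if i = j then t else 0)
    (hneg : ∀ v ≠ 0, (∀ i, B (a i) v = 0) → B v v < 0) :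
    ∃ T : (Fin p ⊕ Fin q → ℝ) →ₗ[ℝ] V,
      B.compl₁₂ T T = signatureForm p q ∧ ∀ i, T (Pi.single (.inl i) √t) = a i := by
  set W := LinearMap.ker (LinearMap.pi fun i => B (a i))
  have hmemW : ∀ v, v ∈ W ↔ ∀ i, B (a i) v = 0 := by simp [W, funext_iff]
  have hW : finrank ℝ W = q := by
    have : finrank ℝ W + p = p + q := (finrank_ker_pi_add_eq_finrank B a ht.ne' ha).trans hV
    omega
  obtain ⟨w, hw⟩ := (hB.domRestrict W).exists_neg_orthonormal_family hW fun v hv =>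
    hneg v (by simpa using hv) ((hmemW v).1 v.2)
  have hst : √t ≠ 0 := (sqrt_pos.2 ht).ne'
  let u : Fin p ⊕ Fin q → V := Sum.elim (fun i => (√t)⁻¹ • a i) (fun j => (w j : V))
  have hu : ∀ x y, B (u x) (u y) = if x = y then Sum.elim (1 : Fin p → ℝ) (-1) x else 0 := by
    rintro (i | i) (j | j)
    · have ht' : (√t)⁻¹ * ((√t)⁻¹ * t) = 1 := by
        rw [← mul_assoc, ← mul_inv, mul_self_sqrt ht.le, inv_mul_cancel₀ ht.ne']
      simp [u, ha, ht']
    · simp [u, (hmemW _).1 (w j).2]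
    · simp [u, ← hB.eq (a j), (hmemW _).1 (w i).2]
    · simpa [u, LinearMap.domRestrict₁₂_apply] using hw i j
  refine ⟨Fintype.linearCombination ℝ u, ?_, fun i => ?_⟩
  · apply (LinearMap.toMatrix₂' ℝ).injective
    ext x y
    simp only [LinearMap.toMatrix₂'_apply, LinearMap.compl₁₂_apply,
      Fintype.linearCombination_apply_single, one_smul, hu, signatureForm,
      Matrix.toLinearMap₂'_apply', Matrix.mulVec_single_one, single_one_dotProduct,
      Matrix.col_apply, Matrix.diagonal_apply]
  · simp [Fintype.linearCombination_apply_single, u, smul_smul, hst]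

theorem volume_eq_ofReal_mul_volume_preimage {m n : Type*} [Fintype m] [Fintype n]
    [DecidableEq m] [DecidableEq n] (e : m ≃ n) (B : (n → ℝ) →ₗ[ℝ] (n → ℝ) →ₗ[ℝ] ℝ)
    (T : (m → ℝ) →ₗ[ℝ] (n → ℝ)) (hT : (LinearMap.toMatrix₂' ℝ (B.compl₁₂ T T)).det ≠ 0)
    (s : Set (n → ℝ)) :
    volume s = ENNReal.ofReal (√|(LinearMap.toMatrix₂' ℝ (B.compl₁₂ T T)).det| /
      √|(LinearMap.toMatrix₂' ℝ B).det|) * volume (T ⁻¹' s) := by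
  -- `T' = T ∘ E` is an endomorphism, so it has a determinant, and `E` permutes coordinates.
  set E := MeasurableEquiv.arrowCongr' e.symm (MeasurableEquiv.refl ℝ)
  have hE : MeasurePreserving E volume volume := volume_preserving_arrowCongr' _ _ (.id volume)
  set T' : (n → ℝ) →ₗ[ℝ] (n → ℝ) := T ∘ₗ (LinearEquiv.funCongrLeft ℝ ℝ e).toLinearMap
  have hT'E : ⇑T' = T ∘ E := rfl
  have hgram : (LinearMap.toMatrix₂' ℝ (B.compl₁₂ T' T')).det =
      (LinearMap.toMatrix₂' ℝ (B.compl₁₂ T T)).det := by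
    rw [← Matrix.det_submatrix_equiv_self e.symm]
    congr 1
    ext i j
    simp [T', LinearMap.funLeft, Pi.single_comp_equiv, -LinearMap.toMatrix₂'_compl₁₂]
  have hdet : LinearMap.det T' ^ 2 * (LinearMap.toMatrix₂' ℝ B).det =
      (LinearMap.toMatrix₂' ℝ (B.compl₁₂ T T)).det := by
    rw [← hgram, LinearMap.toMatrix₂'_compl₁₂, Matrix.det_mul, Matrix.det_mul,
      Matrix.det_transpose, LinearMap.det_toMatrix', mul_right_comm, ← sq]
  have hT' : LinearMap.det T' ≠ 0 := by
    rintro h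
    rw [h, zero_pow two_ne_zero, zero_mul] at hdet
    exact hT hdet.symm
  have habs : |LinearMap.det T'| = √|(LinearMap.toMatrix₂' ℝ (B.compl₁₂ T T)).det| /
      √|(LinearMap.toMatrix₂' ℝ B).det| := by
    have hB : (LinearMap.toMatrix₂' ℝ B).det ≠ 0 := right_ne_zero_of_mul (hdet ▸ hT)
    rw [← hdet, abs_mul, abs_pow, sqrt_mul (by positivity), sqrt_sq (abs_nonneg _),
      mul_div_cancel_right₀ _ (by positivity)]
  rw [← habs, ← hE.measure_preimage_equiv, ← Set.preimage_comp, ← hT'E,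
    Measure.addHaar_preimage_linearMap _ hT', ← mul_assoc, ← ENNReal.ofReal_mul (abs_nonneg _),
    abs_inv, mul_inv_cancel₀ (abs_ne_zero.2 hT'), ENNReal.ofReal_one, one_mul]

theorem volume_setOf_sum_sq_lt_eq_ball {ι : Type*} [Fintype ι] {s : ℝ} (hs : 0 ≤ s) :
    volume {x : ι → ℝ | ∑ i, x i ^ 2 < s} = volume (ball (0 : EuclideanSpace ℝ ι) √s) := by
  rw [EuclideanSpace.ball_zero_eq _ (sqrt_nonneg s), sq_sqrt hs,
    ← (PiLp.volume_preserving_toLp ι).measure_preimage (by measurability)]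
  rfl

theorem volume_setOf_sum_sq_le_eq_closedBall {ι : Type*} [Fintype ι] {s : ℝ} (hs : 0 ≤ s) :
    volume {x : ι → ℝ | ∑ i, x i ^ 2 ≤ s} = volume (closedBall (0 : EuclideanSpace ℝ ι) √s) := by
  rw [EuclideanSpace.closedBall_zero_eq _ (sqrt_nonneg s), sq_sqrt hs,
    ← (PiLp.volume_preserving_toLp ι).measure_preimage (by measurability)]
  rfl

theorem volume_setOf_sum_sq_le_fin_two (s : ℝ) :
    volume {p : Fin 2 → ℝ | ∑ i, p i ^ 2 ≤ s} = ENNReal.ofReal (π * s) := by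
  rcases lt_or_ge s 0 with hs | hs
  · have hempty : {p : Fin 2 → ℝ | ∑ i, p i ^ 2 ≤ s} = ∅ :=
      Set.eq_empty_of_forall_notMem fun p hp => (hs.trans_le (by positivity)).not_ge hp
    rw [hempty, measure_empty, ENNReal.ofReal_of_nonpos (by nlinarith [pi_pos])]
  · rw [volume_setOf_sum_sq_le_eq_closedBall hs, EuclideanSpace.volume_closedBall_fin_two,
      ← ENNReal.ofReal_pow (sqrt_nonneg s), sq_sqrt hs, ← ENNReal.ofReal_mul hs, mul_comm]

theorem volume_annulus_fin_two {a : ℝ} (ha : 0 ≤ a) (s : ℝ) :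
    volume {p : Fin 2 → ℝ | a ≤ ∑ i, p i ^ 2 ∧ ∑ i, p i ^ 2 ≤ s} =
      ENNReal.ofReal (π * (s - a)) := by
  rcases lt_or_ge s a with has | has
  · have hempty : {p : Fin 2 → ℝ | a ≤ ∑ i, p i ^ 2 ∧ ∑ i, p i ^ 2 ≤ s} = ∅ :=
      Set.eq_empty_of_forall_notMem fun p hp => (hp.1.trans hp.2).not_gt has
    rw [hempty, measure_empty, ENNReal.ofReal_of_nonpos (by nlinarith [pi_pos])]
  have hdiff : {p : Fin 2 → ℝ | a ≤ ∑ i, p i ^ 2 ∧ ∑ i, p i ^ 2 ≤ s} =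
      {p | ∑ i, p i ^ 2 ≤ s} \ {p | ∑ i, p i ^ 2 < a} := by
    ext p; simp [and_comm]
  have hdisk : volume {p : Fin 2 → ℝ | ∑ i, p i ^ 2 < a} = ENNReal.ofReal (π * a) := by
    rw [volume_setOf_sum_sq_lt_eq_ball ha, EuclideanSpace.volume_ball_fin_two,
      ← ENNReal.ofReal_pow (sqrt_nonneg a), sq_sqrt ha, ← ENNReal.ofReal_mul ha, mul_comm]
  have hsub : {p : Fin 2 → ℝ | ∑ i, p i ^ 2 < a} ⊆ {p | ∑ i, p i ^ 2 ≤ s} :=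
    fun p hp => le_trans (le_of_lt hp) has
  rw [hdiff, measure_sdiff hsub (by measurability) (by rw [hdisk]; exact ENNReal.ofReal_ne_top),
    volume_setOf_sum_sq_le_fin_two, hdisk,
    ← ENNReal.ofReal_sub _ (by positivity), mul_sub]

theorem volume_setOf_sum_sq_le_s13 {ι : Type*} [Fintype ι] [Nonempty ι] {s : ℝ} (hs : 0 ≤ s) :
    volume {x : ι → ℝ | ∑ i, x i ^ 2 ≤ s} =
      ENNReal.ofReal (2 * π ^ ((Fintype.card ι : ℝ) / 2) * s ^ ((Fintype.card ι : ℝ) / 2) /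
        (Fintype.card ι * Gamma ((Fintype.card ι : ℝ) / 2))) := by
  rw [volume_setOf_sum_sq_le_eq_closedBall hs, EuclideanSpace.volume_closedBall,
    ← ENNReal.ofReal_pow (sqrt_nonneg _), ← ENNReal.ofReal_mul (by positivity)]
  congr 1
  have hn : (0 : ℝ) < Fintype.card ι := by exact_mod_cast Fintype.card_pos
  rw [Gamma_add_one (by positivity), sqrt_eq_rpow, sqrt_eq_rpow, ← rpow_natCast, ← rpow_natCast,
    ← rpow_mul hs, ← rpow_mul pi_pos.le]
  have := Gamma_pos_of_pos (half_pos hn)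
  field_simp

theorem volume_cone_eq_volume_ball {β : Type*} [Fintype β] (s : ℝ) :
    volume {c : Fin 2 ⊕ β → ℝ |
        ∑ j, c (.inr j) ^ 2 ≤ ∑ i, c (.inl i) ^ 2 ∧ ∑ i, c (.inl i) ^ 2 ≤ s} =
      volume {c : Fin 2 ⊕ β → ℝ | ∑ x, c x ^ 2 ≤ s} := by
  have hΦ := (volume_measurePreserving_sumPiEquivProdPi fun _ : Fin 2 ⊕ β => ℝ).symm
  rw [← hΦ.measure_preimage_equiv, ← hΦ.measure_preimage_equiv, Measure.volume_eq_prod,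
    Measure.prod_apply_symm (by measurability), Measure.prod_apply_symm (by measurability)]
  refine lintegral_congr fun w => ?_
  simp only [Set.preimage_ofPred_eq, MeasurableEquiv.coe_sumPiEquivProdPi_symm,
    Equiv.sumPiEquivProdPi_symm_apply, Fintype.sum_sum_type, ← le_sub_iff_add_le]
  rw [volume_annulus_fin_two (by positivity), volume_setOf_sum_sq_le_fin_two]

theorem preimage_upsilon_eq_cone {V : Type*} [AddCommGroup V] [Module ℝ V] {q : ℕ}
    {B : V →ₗ[ℝ] V →ₗ[ℝ] ℝ} {T : (Fin 2 ⊕ Fin q → ℝ) →ₗ[ℝ] V}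
    (hT : B.compl₁₂ T T = signatureForm 2 q) {t : ℝ} (ht : 0 < t) :
    T ⁻¹' {v | 0 ≤ B v v ∧
        (B (T (Pi.single (.inl 0) √t)) v) ^ 2 + (B (T (Pi.single (.inl 1) √t)) v) ^ 2 ≤ 1} =
      {c | ∑ j, c (.inr j) ^ 2 ≤ ∑ i, c (.inl i) ^ 2 ∧ ∑ i, c (.inl i) ^ 2 ≤ 1 / t} := by
  have hBT : ∀ c c', B (T c) (T c') = signatureForm 2 q c c' := fun c c' => by rw [← hT]; rfl
  have hsingle : ∀ i c, B (T (Pi.single (.inl i) √t)) (T c) = √t * c (.inl i) := by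
    intro i c
    simp [hBT, signatureForm_apply, Pi.single_apply]
  ext c
  simp only [Set.mem_preimage, Set.mem_ofPred_eq, hsingle]
  rw [hBT, signatureForm_apply]
  simp only [← sq, sub_nonneg, mul_pow, sq_sqrt ht.le, Fin.sum_univ_two, le_div_iff₀ ht,
    mul_comm t, ← add_mul]

/-- For a symmetric bilinear form of signature `(2,ρ)` on `ℝ^(ρ+2)` and
`φ` with `Re φ, Im φ` spanning a positive definite 2-plane,
`⟨Re φ,Re φ⟩ = ⟨Im φ,Im φ⟩ = t > 0`, `⟨Re φ,Im φ⟩ = 0`, the set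
`Υ = {v : ⟨v,v⟩ ≥ 0, ⟨Re φ,v⟩² + ⟨Im φ,v⟩² ≤ 1}` has volume
`2π^((ρ+2)/2)/((ρ+2)·Γ(ρ/2+1)·t^((ρ+2)/2)·√|Disc|)`, where `Disc` is the determinant of the
Gram matrix in the standard basis. -/
theorem volume_upsilon_region
    (ρ : ℕ) (B : (Fin (ρ + 2) → ℝ) →ₗ[ℝ] (Fin (ρ + 2) → ℝ) →ₗ[ℝ] ℝ)
    (hsymm : ∀ x y, B x y = B y x)
    (reφ imφ : Fin (ρ + 2) → ℝ) (t : ℝ) (ht : 0 < t)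
    (hrr : B reφ reφ = t) (hii : B imφ imφ = t) (hri : B reφ imφ = 0)
    (hneg : ∀ v, B v reφ = 0 → B v imφ = 0 → v ≠ 0 → B v v < 0)
    (Disc : ℝ)
    (hDisc : (Matrix.of fun i j =>
        B (Pi.basisFun ℝ (Fin (ρ + 2)) i) (Pi.basisFun ℝ (Fin (ρ + 2)) j)).det = Disc) :
    volume {v : Fin (ρ + 2) → ℝ |
        0 ≤ B v v ∧ (B reφ v) ^ 2 + (B imφ v) ^ 2 ≤ 1}
      = ENNReal.ofReal
          (2 * π ^ (((ρ : ℝ) + 2) / 2) /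
            (((ρ : ℝ) + 2) * Real.Gamma ((ρ : ℝ) / 2 + 1) * t ^ (((ρ : ℝ) + 2) / 2) *
              Real.sqrt |Disc|)) := by
  obtain ⟨T, hT, hTa⟩ := exists_compl₁₂_eq_signatureForm (p := 2) (q := ρ)
    (by rw [finrank_fin_fun, add_comm]) ⟨hsymm⟩ (a := ![reφ, imφ]) ht
    (by intro i j; fin_cases i <;> fin_cases j <;> simp [hrr, hii, hri, hsymm imφ reφ])
    (fun v hv h => hneg v (hsymm v reφ ▸ h 0) (hsymm v imφ ▸ h 1) hv)
  have hre : T (Pi.single (.inl 0) √t) = reφ := hTa 0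
  have him : T (Pi.single (.inl 1) √t) = imφ := hTa 1
  have hGram : LinearMap.toMatrix₂' ℝ B = Matrix.of fun i j =>
      B (Pi.basisFun ℝ (Fin (ρ + 2)) i) (Pi.basisFun ℝ (Fin (ρ + 2)) j) := by
    ext i j
    simp
  rw [volume_eq_ofReal_mul_volume_preimage (finSumFinEquiv.trans (finCongr (add_comm 2 ρ))) B T
      (by simp [hT, det_toMatrix₂'_signatureForm]), ← hre, ← him, preimage_upsilon_eq_cone hT ht,
    volume_cone_eq_volume_ball, volume_setOf_sum_sq_le_s13 (one_div_nonneg.2 ht.le), hT,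
    det_toMatrix₂'_signatureForm, hGram, hDisc, ← ENNReal.ofReal_mul (by positivity)]
  congr 1
  have hcard : (Fintype.card (Fin 2 ⊕ Fin ρ) : ℝ) = ρ + 2 := by simp [add_comm]
  rw [hcard, show (ρ : ℝ) / 2 + 1 = (ρ + 2) / 2 by ring, abs_pow, abs_neg, abs_one, one_pow,
    sqrt_one, one_div t, inv_rpow ht.le]
  generalize (ρ : ℝ) + 2 = n
  ring
end
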